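/- Assume n ≥ 2 and let x ∈ ℂⁿ satisfy v₁*x ≠ 0 and x − v₁(v₁*x) ≠ 0. Then tan∠(A⁻¹x, v₁) ≤ (λ₁/λ₂) · tan∠(x, v₁). (The worst-case one-step convergence bound for the inverse power method.) -/

import Mathlib

open scoped ComplexOrder

/-- The tangent of the angle between a nonzero vector `x` and a unit vector `v₁`:
`tan∠(x, v₁) = ‖x − v₁(v₁*x)‖₂ / |v₁*x|`. -/
noncomputable def tanAngle {m : ℕ} (v₁ x : EuclideanSpace ℂ (Fin m)) : ℝ :=
  ‖x - (inner ℂ v₁ x : ℂ) • v₁‖ / ‖(inner ℂ v₁ x : ℂ)‖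

/-! In the eigenbasis `v`, the map `A⁻¹` multiplies the `i`-th coordinate by `1 / λᵢ`. So the
`v₁`-component of `A⁻¹x` is that of `x` scaled by exactly `1 / λ₁`, while the residual orthogonal
to `v₁` is the image under `A⁻¹` of the residual of `x`, whose coordinates are all scaled by at
most `1 / λ₂`; by Parseval its norm shrinks by at least that factor. -/

namespace OrthonormalBasis

variable {𝕜 E ι : Type*} [RCLike 𝕜] [NormedAddCommGroup E] [InnerProductSpace 𝕜 E]
  [Fintype ι] (b : OrthonormalBasis ι 𝕜 E) {T : E →ₗ[𝕜] E} {s : ι → 𝕜}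

theorem inner_apply_of_apply_eq_smul (hT : ∀ i, T (b i) = s i • b i) (i : ι) (x : E) :
    inner 𝕜 (b i) (T x) = s i * inner 𝕜 (b i) x := by
  conv_lhs => rw [← b.sum_repr' x]
  simp only [map_sum, map_smul, hT, smul_smul]
  rw [b.orthonormal.inner_right_fintype, mul_comm]

theorem norm_sq_apply_eq_sum (hT : ∀ i, T (b i) = s i • b i) (x : E) :
    ‖T x‖ ^ 2 = ∑ i, ‖s i‖ ^ 2 * ‖inner 𝕜 (b i) x‖ ^ 2 := by
  simp only [← b.sum_sq_norm_inner_right (T x), b.inner_apply_of_apply_eq_smul hT, norm_mul,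
    mul_pow]

theorem norm_apply_le_of_inner_eq_zero (hT : ∀ i, T (b i) = s i • b i) {i₀ : ι} {r : ℝ}
    (hr : 0 ≤ r) (hs : ∀ i, i ≠ i₀ → ‖s i‖ ≤ r) {y : E} (hy : inner 𝕜 (b i₀) y = 0) :
    ‖T y‖ ≤ r * ‖y‖ := by
  refine pow_le_pow_iff_left₀ (norm_nonneg _) (by positivity) two_ne_zero |>.mp ?_
  rw [b.norm_sq_apply_eq_sum hT, mul_pow, ← b.sum_sq_norm_inner_right y, Finset.mul_sum]
  refine Finset.sum_le_sum fun i _ => ?_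
  rcases eq_or_ne i i₀ with rfl | hi
  · simp [hy]
  · gcongr
    exact hs i hi

theorem apply_sub_inner_smul (hT : ∀ i, T (b i) = s i • b i) (i₀ : ι) (x : E) :
    T (x - inner 𝕜 (b i₀) x • b i₀) = T x - inner 𝕜 (b i₀) (T x) • b i₀ := by
  rw [map_sub, map_smul, hT, smul_smul, b.inner_apply_of_apply_eq_smul hT, mul_comm]

end OrthonormalBasis

theorem tanAngle_apply_le {ι : Type*} [Fintype ι] {m : ℕ}
    (b : OrthonormalBasis ι ℂ (EuclideanSpace ℂ (Fin m)))
    {T : EuclideanSpace ℂ (Fin m) →ₗ[ℂ] EuclideanSpace ℂ (Fin m)} {s : ι → ℂ}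
    (hT : ∀ i, T (b i) = s i • b i) {i₀ : ι} {r : ℝ} (hr : 0 ≤ r)
    (hs : ∀ i, i ≠ i₀ → ‖s i‖ ≤ r) (x : EuclideanSpace ℂ (Fin m)) :
    tanAngle (b i₀) (T x) ≤ r / ‖s i₀‖ * tanAngle (b i₀) x := by
  have h_perp : inner ℂ (b i₀) (x - inner ℂ (b i₀) x • b i₀) = 0 := by simp
  unfold tanAngle
  rw [← b.apply_sub_inner_smul hT, b.inner_apply_of_apply_eq_smul hT, norm_mul, div_mul_div_comm]
  gcongr
  exact b.norm_apply_le_of_inner_eq_zero hT hr hs h_perp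

theorem Matrix.toEuclideanLin_inv_apply_of_apply_eq_smul {𝕜 n : Type*} [RCLike 𝕜] [Fintype n]
    [DecidableEq n] {A : Matrix n n 𝕜} (hA : IsUnit A.det) {c : 𝕜} {w : EuclideanSpace 𝕜 n}
    (h : toEuclideanLin A w = c • w) : toEuclideanLin A⁻¹ w = c⁻¹ • w := by
  have hw : w = c • toEuclideanLin A⁻¹ w := by
    rw [← map_smul, ← h, ← LinearMap.comp_apply, ← toLpLin_mul_same, nonsing_inv_mul A hA,
      toLpLin_one, LinearMap.id_apply]
  rcases eq_or_ne c 0 with rfl | hc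
  · rw [hw, zero_smul, map_zero, smul_zero]
  · conv_rhs => rw [hw, smul_smul, inv_mul_cancel₀ hc, one_smul]

theorem inverse_power_worst_case_bound_general {n : ℕ}
    (A : Matrix (Fin (n + 2)) (Fin (n + 2)) ℂ) (hA : A.PosDef)
    (μ : Fin (n + 2) → ℝ) (hμpos : ∀ i, 0 < μ i) (hμmono : Monotone μ)
    (v : Fin (n + 2) → EuclideanSpace ℂ (Fin (n + 2))) (hv : Orthonormal ℂ v)
    (hAv : ∀ i, Matrix.toEuclideanLin A (v i) = (μ i : ℂ) • v i)
    (x : EuclideanSpace ℂ (Fin (n + 2))) :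
    tanAngle (v 0) (Matrix.toEuclideanLin A⁻¹ x) ≤ μ 0 / μ 1 * tanAngle (v 0) x := by
  let b := OrthonormalBasis.mk hv (hv.linearIndependent.span_eq_top_of_card_eq_finrank (by simp)).ge
  have hb : ⇑b = v := OrthonormalBasis.coe_mk _ _
  have hdet : IsUnit A.det := (Matrix.isUnit_iff_isUnit_det A).mp hA.isUnit
  have hT : ∀ i, Matrix.toEuclideanLin A⁻¹ (b i) = ((μ i : ℂ))⁻¹ • b i := fun i => by
    rw [hb]; exact Matrix.toEuclideanLin_inv_apply_of_apply_eq_smul hdet (hAv i)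
  have hnorm : ∀ i, ‖((μ i : ℂ))⁻¹‖ = (μ i)⁻¹ := fun i => by
    rw [norm_inv, Complex.norm_real, Real.norm_of_nonneg (hμpos i).le]
  have hs : ∀ i, i ≠ 0 → ‖((μ i : ℂ))⁻¹‖ ≤ (μ 1)⁻¹ := fun i hi => by
    rw [hnorm]; exact inv_anti₀ (hμpos 1) (hμmono (Fin.one_le_of_ne_zero hi))
  have key := tanAngle_apply_le b hT (inv_nonneg.mpr (hμpos 1).le) hs x
  rwa [hnorm, inv_div_inv, hb] at key

/-- The worst-case one-step convergence bound for the inverse power method: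
`tan∠(A⁻¹x, v₁) ≤ (λ₁/λ₂) · tan∠(x, v₁)` (here `n ≥ 2`, i.e. dimension is `n + 2`). -/
theorem inverse_power_worst_case_bound {n : ℕ}
    (A : Matrix (Fin (n + 2)) (Fin (n + 2)) ℂ) (hA : A.PosDef)
    (μ : Fin (n + 2) → ℝ) (hμpos : ∀ i, 0 < μ i) (hμmono : Monotone μ)
    (v : Fin (n + 2) → EuclideanSpace ℂ (Fin (n + 2))) (hv : Orthonormal ℂ v)
    (hAv : ∀ i, Matrix.toEuclideanLin A (v i) = (μ i : ℂ) • v i)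
    (x : EuclideanSpace ℂ (Fin (n + 2)))
    (hx1 : (inner ℂ (v 0) x : ℂ) ≠ 0)
    (hx2 : x - (inner ℂ (v 0) x : ℂ) • v 0 ≠ 0) :
    tanAngle (v 0) (Matrix.toEuclideanLin A⁻¹ x) ≤ μ 0 / μ 1 * tanAngle (v 0) x :=
  inverse_power_worst_case_bound_general A hA μ hμpos hμmono v hv hAv x
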